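/- arXiv:1111.1024 — 3 statements merged into one kernel-verified Lean document; each statement's English description precedes it below -/
import Mathlib

section
/- For every nonnegative integer n: ∑_{k=0}^n C(n,k)^{−2} · {1 − 2(n−2k)H_k} = 2·(1+n)^2/(2+n) · H_{n+1}, i.e. T_n^{(−2)} = 2(1+n)^2 H_{n+1}/(2+n). -/
noncomputable def H (m : ℕ) : ℚ := ∑ j ∈ Finset.range m, (1 : ℚ) / (j + 1)

/-! Creative telescoping. With `λₙ = (n+2)³ / ((n+3)(n+1)²)` the summands `F(n,k)` of `Tₙ` satisfy
`F(n+1,k) - λₙ F(n,k) = G(n,k+1) - G(n,k)` for the rational certificate `G` below, found by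
Zeilberger's algorithm. Summing over `k` gives `Tₙ₊₁ = λₙ Tₙ + 2(n+2)/(n+3)`, and the closed form
satisfies this recurrence because `H (n+2) = H (n+1) + 1/(n+2)`. -/


namespace PauleSchneider

lemma H_succ (m : ℕ) : H (m + 1) = H m + 1 / ((m : ℚ) + 1) := by
  simp [H, Finset.sum_range_succ]

lemma cast_choose_mul_succ {R : Type*} [Ring R] {n k : ℕ} (hk : k ≤ n + 1) :
    (n.choose k : R) * (n + 1) = ((n + 1).choose k : R) * (n + 1 - k) := by
  have h := congrArg (Nat.cast : ℕ → R) (Nat.choose_mul_succ_eq n k)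
  push_cast [Nat.cast_sub hk] at h
  exact h

lemma cast_choose_succ_right_mul {R : Type*} [Ring R] {n k : ℕ} (hk : k ≤ n) :
    (n.choose (k + 1) : R) * (k + 1) = (n.choose k : R) * (n - k) := by
  have h := congrArg (Nat.cast : ℕ → R) (Nat.choose_succ_right_eq n k)
  push_cast [Nat.cast_sub hk] at h
  exact h

noncomputable def summand (n k : ℕ) : ℚ :=
  (n.choose k : ℚ) ^ (-2 : ℤ) * (1 + (-2) * ((n : ℚ) - 2 * k) * H k)

noncomputable def recurrenceCoeff (n : ℕ) : ℚ :=
  ((n : ℚ) + 2) ^ 3 / (((n : ℚ) + 3) * ((n : ℚ) + 1) ^ 2)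

noncomputable def certificate (n k : ℕ) : ℚ :=
  (((n : ℚ) + 2) * (2 * k + 1) - (k : ℚ) ^ 2) / (((n : ℚ) + 3) ^ 2 * ((n + 1).choose k : ℚ) ^ 2)
    - 2 * k * (2 * (n : ℚ) + 4 - k) * H k / (((n : ℚ) + 3) * ((n + 1).choose k : ℚ) ^ 2)

lemma summand_succ_sub_telescopes {n k : ℕ} (hk : k ≤ n) :
    summand (n + 1) k - recurrenceCoeff n * summand n k
      = certificate n (k + 1) - certificate n k := by
  have hc0 : ((n + 1).choose k : ℚ) ≠ 0 := Nat.cast_ne_zero.mpr (Nat.choose_pos (by omega)).ne'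
  have hkn : (k : ℚ) ≤ n := by exact_mod_cast hk
  have hd : (n : ℚ) + 1 - k ≠ 0 := by linarith
  have lower : (n.choose k : ℚ) = (n + 1 - k) * (n + 1).choose k / (n + 1) := by
    rw [eq_div_iff (by positivity), cast_choose_mul_succ (by omega), mul_comm]
  have upper : ((n + 1).choose (k + 1) : ℚ) = (n + 1 - k) * (n + 1).choose k / (k + 1) := by
    rw [eq_div_iff (by positivity), cast_choose_succ_right_mul (by omega), mul_comm]; push_cast; ring
  simp only [summand, recurrenceCoeff, certificate, zpow_neg, zpow_two, H_succ, Nat.cast_add,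
    Nat.cast_one, lower, upper]
  -- now an identity of rational functions in `n`, `k`, `H k` and `c = C(n+1, k)`
  generalize ((n + 1).choose k : ℚ) = c at *
  field_simp
  ring

lemma summand_self_add_certificate (n : ℕ) :
    summand (n + 1) (n + 1) + (certificate n (n + 1) - certificate n 0)
      = 2 * ((n : ℚ) + 2) / ((n : ℚ) + 3) := by
  simp only [summand, certificate, zpow_neg, Nat.choose_self, Nat.choose_zero_right, H,
    Finset.range_zero, Finset.sum_empty]
  push_cast
  field_simp
  ring

lemma sum_summand_succ (n : ℕ) :
    ∑ k ∈ Finset.range (n + 2), summand (n + 1) k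
      = recurrenceCoeff n * ∑ k ∈ Finset.range (n + 1), summand n k
        + 2 * ((n : ℚ) + 2) / ((n : ℚ) + 3) := by
  have telescope : ∑ k ∈ Finset.range (n + 1),
      (summand (n + 1) k - recurrenceCoeff n * summand n k)
        = certificate n (n + 1) - certificate n 0 := by
    rw [← Finset.sum_range_sub]
    exact Finset.sum_congr rfl fun k hk ↦
      summand_succ_sub_telescopes (Nat.lt_succ_iff.mp (Finset.mem_range.mp hk))
  rw [Finset.sum_sub_distrib, ← Finset.mul_sum] at telescope
  rw [Finset.sum_range_succ, ← summand_self_add_certificate n]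
  linarith

end PauleSchneider

open PauleSchneider in
theorem paule_schneider_neg2 (n : ℕ) :
    ∑ k ∈ Finset.range (n + 1),
      ((n.choose k : ℚ))^(-2 : ℤ) * (1 + (-2) * ((n : ℚ) - 2*k) * H k) =
      2 * (1 + (n : ℚ))^2 / (2 + (n : ℚ)) * H (n + 1) := by
  change ∑ k ∈ Finset.range (n + 1), summand n k = _
  induction n with
  | zero => simp [summand, H]
  | succ n ih =>
    rw [sum_summand_succ, ih, H_succ (n + 1), recurrenceCoeff]
    push_cast
    field_simp
    ring
end

section
/- For every nonnegative integer n: ∑_{k=0}^n C(n,k)^{−1} · {1 − (n−2k)H_k} = (1+n)·H_{n+1}, i.e. T_n^{(−1)} = (1+n)H_{n+1}. -/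
/-!
The summand is a discrete derivative in `k`: with `g k = (n + 1 - k) H_k / C(n,k)`, one has
`g (k + 1) - g k = (1 - (n - 2k) H_k) / C(n,k)` for `k < n`. Hence the first `n` terms sum to
`g n - g 0 = H_n`, and adding the last term `1 + n H_n` gives `(n + 1) H_{n+1}`.
-/

lemma H_zero : H 0 = 0 := rfl

lemma H_succ (m : ℕ) : H (m + 1) = H m + 1 / (m + 1) := by
  simp [H, Finset.sum_range_succ]

lemma cast_choose_succ_mul_sub {n k : ℕ} (hk : k < n) :
    (n.choose (k + 1) : ℚ) * (k + 1) = n.choose k * (n - k) := by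
  have h := congrArg (Nat.cast : ℕ → ℚ) (Nat.choose_succ_right_eq n k)
  push_cast [Nat.cast_sub hk.le] at h
  exact h

noncomputable def telescopingTerm (n k : ℕ) : ℚ := ((n : ℚ) + 1 - k) * H k / n.choose k

lemma telescopingTerm_succ_sub {n k : ℕ} (hk : k < n) :
    telescopingTerm n (k + 1) - telescopingTerm n k =
      (n.choose k : ℚ)⁻¹ * (1 - ((n : ℚ) - 2 * k) * H k) := by
  have hck : (n.choose k : ℚ) ≠ 0 := by exact_mod_cast (Nat.choose_pos hk.le).ne'
  have hck1 : (n.choose (k + 1) : ℚ) ≠ 0 := by exact_mod_cast (Nat.choose_pos hk).ne'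
  have hrel := cast_choose_succ_mul_sub hk
  simp only [telescopingTerm, H_succ]
  push_cast
  field_simp
  linear_combination (-(k : ℚ) - 1) * H k * hrel - hrel

theorem paule_schneider_neg1 (n : ℕ) :
    ∑ k ∈ Finset.range (n + 1),
      ((n.choose k : ℚ))^(-1 : ℤ) * (1 + (-1) * ((n : ℚ) - 2*k) * H k) =
      (1 + (n : ℚ)) * H (n + 1) := by
  have hbody : ∑ k ∈ Finset.range n,
      ((n.choose k : ℚ))^(-1 : ℤ) * (1 + (-1) * ((n : ℚ) - 2*k) * H k) = H n := by
    calc _ = ∑ k ∈ Finset.range n, (telescopingTerm n (k + 1) - telescopingTerm n k) := by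
          refine Finset.sum_congr rfl fun k hk => ?_
          rw [telescopingTerm_succ_sub (Finset.mem_range.mp hk), zpow_neg_one]
          ring
      _ = H n := by
          rw [Finset.sum_range_sub]
          simp [telescopingTerm, H_zero]
  rw [Finset.sum_range_succ, hbody, Nat.choose_self, H_succ]
  have hn : (n : ℚ) + 1 ≠ 0 := by positivity
  field_simp
  ring
end

section
/- For every nonnegative integer n: ∑_{k=0}^n C(n,k) · {1 + (n−2k)H_k} = 1, i.e. T_n^{(1)} = 1. -/
open Finset

section ChooseSums

variable {R : Type*} [CommRing R]

theorem Nat.cast_choose_succ_mul_sub (m k : ℕ) :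
    ((m + 1).choose k : R) * (m + 1 - k) = (m + 1) * m.choose k := by
  rcases le_or_gt k (m + 1) with hk | hk
  · have h := congrArg (Nat.cast : ℕ → R) (Nat.choose_mul_succ_eq m k)
    push_cast [hk] at h
    linear_combination -h
  · simp [Nat.choose_eq_zero_of_lt hk, Nat.choose_eq_zero_of_lt (by omega : m < k)]

theorem sum_range_choose_succ_mul_sub (m : ℕ) (f : ℕ → R) :
    ∑ k ∈ range (m + 2), ((m + 1).choose k : R) * (m + 1 - k) * f k =
      (m + 1) * ∑ k ∈ range (m + 1), (m.choose k : R) * f k := by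
  simp only [Nat.cast_choose_succ_mul_sub, mul_assoc, ← mul_sum]
  rw [sum_range_succ, Nat.choose_succ_self, Nat.cast_zero, zero_mul, add_zero]

theorem sum_range_choose_succ_mul_self (m : ℕ) (f : ℕ → R) :
    ∑ k ∈ range (m + 2), ((m + 1).choose k : R) * k * f k =
      (m + 1) * ∑ k ∈ range (m + 1), (m.choose k : R) * f (k + 1) := by
  rw [sum_range_succ', mul_sum]
  refine (add_eq_left.mpr (by simp)).trans (sum_congr rfl fun k _ => ?_)
  have h := congrArg (Nat.cast : ℕ → R) (Nat.add_one_mul_choose_eq m k)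
  push_cast at h ⊢
  linear_combination (f (k + 1)) * h.symm

theorem sum_range_choose_mul_sub_two_mul (m : ℕ) (f : ℕ → R) :
    ∑ k ∈ range (m + 2), ((m + 1).choose k : R) * (m + 1 - 2 * k) * f k =
      (m + 1) * ∑ k ∈ range (m + 1), (m.choose k : R) * (f k - f (k + 1)) := by
  have hsplit : ∀ k, ((m + 1).choose k : R) * (m + 1 - 2 * k) * f k =
      ((m + 1).choose k : R) * (m + 1 - k) * f k - ((m + 1).choose k : R) * k * f k :=
    fun k => by ring
  rw [sum_congr rfl fun k _ => hsplit k, sum_sub_distrib, sum_range_choose_succ_mul_sub,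
    sum_range_choose_succ_mul_self, ← mul_sub, ← sum_sub_distrib]
  simp only [mul_sub]

end ChooseSums

theorem sum_range_choose_div_succ {K : Type*} [Field K] [CharZero K] (m : ℕ) :
    (m + 1) * ∑ k ∈ range (m + 1), (m.choose k : K) / (k + 1) = 2 ^ (m + 1) - 1 := by
  have hterm : ∀ k ∈ range (m + 1), (m + 1) * ((m.choose k : K) / (k + 1)) =
      ((m + 1).choose (k + 1) : K) := fun k _ => by
    have h := congrArg (Nat.cast : ℕ → K) (Nat.add_one_mul_choose_eq m k)
    push_cast at h
    field_simp
    linear_combination h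
  have hsum := congrArg (Nat.cast : ℕ → K) (Nat.sum_range_choose (m + 1))
  rw [sum_range_succ', Nat.choose_zero_right] at hsum
  push_cast at hsum
  rw [mul_sum, sum_congr rfl hterm]
  linear_combination hsum

theorem H_succ_sub (k : ℕ) : H (k + 1) - H k = 1 / (k + 1) := by
  simp [H, sum_range_succ]

theorem paule_schneider_one (n : ℕ) :
    ∑ k ∈ Finset.range (n + 1),
      ((n.choose k : ℚ))^(1 : ℕ) * (1 + (1) * ((n : ℚ) - 2*k) * H k) =
      1 := by
  simp only [pow_one, one_mul, mul_add, mul_one, sum_add_distrib, ← mul_assoc]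
  have hbinom := congrArg (Nat.cast : ℕ → ℚ) (Nat.sum_range_choose n)
  push_cast at hbinom
  rw [hbinom]
  cases n with
  | zero => simp [H]
  | succ m =>
    push_cast
    have hparts : ∑ k ∈ range (m + 2), ((m + 1).choose k : ℚ) * (m + 1 - 2 * k) * H k =
        -((m + 1) * ∑ k ∈ range (m + 1), (m.choose k : ℚ) / (k + 1)) := by
      rw [sum_range_choose_mul_sub_two_mul, ← mul_neg, ← sum_neg_distrib]
      refine congrArg _ (sum_congr rfl fun k _ => ?_)
      rw [← neg_sub, H_succ_sub]
      ring
    rw [hparts, sum_range_choose_div_succ]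
    ring
end
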